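/- arXiv:1511.03679 — 2 statements merged into one kernel-verified Lean document; each statement's English description precedes it below -/
import Mathlib

section
/- If a1 and a2 are real numbers with a2 ≠ 0 and a1² > 4·a2 > 0, then the quadratic equation a1²·λ = a2·(1+λ)² has exactly one solution λ in the open interval (-1, 1). -/
theorem stmt_0 (a1 a2 : ℝ) (ha2 : a2 ≠ 0) (h1 : a1 ^ 2 > 4 * a2) (h2 : 4 * a2 > 0) :
    ∃! lam : ℝ, lam ∈ Set.Ioo (-1 : ℝ) 1 ∧ a1 ^ 2 * lam = a2 * (1 + lam) ^ 2 := by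
  have hc : (0:ℝ) < a2 := by linarith
  have hb : (0:ℝ) < a1 ^ 2 := by linarith
  have hd : (0:ℝ) < a1 ^ 2 - 4 * a2 := by linarith
  set s := Real.sqrt (a1 ^ 2 * (a1 ^ 2 - 4 * a2)) with hsdef
  have hs2 : s ^ 2 = a1 ^ 2 * (a1 ^ 2 - 4 * a2) := Real.sq_sqrt (by positivity)
  have hsnn : 0 ≤ s := Real.sqrt_nonneg _
  have hslt : s < a1 ^ 2 - 2 * a2 := by nlinarith [hs2, sq_nonneg s]
  have hsgt : a1 ^ 2 - 4 * a2 < s := by nlinarith [hs2]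
  have key : ∀ x y : ℝ, x ∈ Set.Ioo (-1:ℝ) 1 → y ∈ Set.Ioo (-1:ℝ) 1 →
      a1 ^ 2 * x = a2 * (1 + x) ^ 2 → a1 ^ 2 * y = a2 * (1 + y) ^ 2 → x = y := by
    rintro x y ⟨hx1, hx2⟩ ⟨hy1, hy2⟩ hex hey
    by_contra hne
    have hfac : (x - y) * (a2 * (x + y) + 2 * a2 - a1 ^ 2) = 0 := by
      linear_combination hey - hex
    have h0 : a2 * (x + y) + 2 * a2 - a1 ^ 2 = 0 := by
      rcases mul_eq_zero.mp hfac with h | h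
      · exact absurd (sub_eq_zero.mp h) hne
      · exact h
    have hxy : x * y = 1 := by
      have : a2 * (x * y) = a2 := by linear_combination hex + x * h0
      field_simp at this
      linarith [this]
    nlinarith [sq_nonneg (x - y), mul_pos (mul_pos (by linarith : (0:ℝ) < 1 - x) (by linarith : (0:ℝ) < 1 - y)) (mul_pos (by linarith : (0:ℝ) < 1 + x) (by linarith : (0:ℝ) < 1 + y))]
  refine ⟨(a1 ^ 2 - 2 * a2 - s) / (2 * a2), ⟨⟨?_, ?_⟩, ?_⟩, ?_⟩
  · have : 0 < (a1 ^ 2 - 2 * a2 - s) / (2 * a2) := div_pos (by linarith) (by linarith)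
    linarith
  · rw [div_lt_one (by positivity)]; linarith
  · field_simp
    ring_nf
    nlinarith [hs2]
  · intro y hy
    exact key y _ hy.1 ⟨by
        have : 0 < (a1 ^ 2 - 2 * a2 - s) / (2 * a2) := div_pos (by linarith) (by linarith)
        linarith, by rw [div_lt_one (by positivity)]; linarith⟩ hy.2 (by
      field_simp
      ring_nf
      nlinarith [hs2])
end

section
/- If a1² < 4·a2 (with a1 ≠ 0), then the equation a1²·λ = a2·(1+λ)² has exactly one solution of the form λ = e^{iθ} with θ ∈ (0, π). -/
lemma key_identity (θ : ℝ) : (1 + Complex.exp (θ * Complex.I)) ^ 2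
    = ((4 * Real.cos (θ / 2) ^ 2 : ℝ) : ℂ) * Complex.exp (θ * Complex.I) := by
  have h1 : (θ : ℂ) * Complex.I = ((θ / 2 : ℝ) : ℂ) * Complex.I + ((θ / 2 : ℝ) : ℂ) * Complex.I := by
    push_cast; ring
  rw [h1, Complex.exp_add]
  have h2 : (1 : ℂ) + Complex.exp (((θ / 2 : ℝ) : ℂ) * Complex.I) *
      Complex.exp (((θ / 2 : ℝ) : ℂ) * Complex.I)
      = Complex.exp (((θ / 2 : ℝ) : ℂ) * Complex.I) * (2 * Complex.cos ((θ / 2 : ℝ) : ℂ)) := by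
    rw [Complex.two_cos, mul_add, ← Complex.exp_add, ← Complex.exp_add]
    rw [show ((θ / 2 : ℝ) : ℂ) * Complex.I + -((θ / 2 : ℝ) : ℂ) * Complex.I = 0 by ring,
        Complex.exp_zero]
    ring
  rw [h2]
  have h3 : Complex.cos ((θ / 2 : ℝ) : ℂ) = ((Real.cos (θ / 2) : ℝ) : ℂ) := by
    rw [Complex.ofReal_cos]
  rw [h3]
  push_cast
  ring

theorem stmt_1 (a1 a2 : ℝ) (ha1 : a1 ≠ 0) (h : a1 ^ 2 < 4 * a2) :
    ∃! θ : ℝ, θ ∈ Set.Ioo 0 Real.pi ∧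
      (a1 : ℂ) ^ 2 * Complex.exp (θ * Complex.I) =
        (a2 : ℂ) * (1 + Complex.exp (θ * Complex.I)) ^ 2 := by
  have ha1sq : 0 < a1 ^ 2 := by positivity
  have ha2 : 0 < a2 := by nlinarith
  set c := Real.sqrt (a1 ^ 2 / (4 * a2)) with hc
  have hc0 : 0 < c := Real.sqrt_pos.mpr (by positivity)
  have hcsq : c ^ 2 = a1 ^ 2 / (4 * a2) := Real.sq_sqrt (by positivity)
  have hc1 : c < 1 := by
    nlinarith [hcsq, div_lt_one (show (0:ℝ) < 4 * a2 by linarith) |>.mpr h]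
  -- the equation is equivalent to a real equation
  have hequiv : ∀ θ : ℝ, ((a1 : ℂ) ^ 2 * Complex.exp (θ * Complex.I) =
      (a2 : ℂ) * (1 + Complex.exp (θ * Complex.I)) ^ 2) ↔
      a1 ^ 2 = 4 * a2 * Real.cos (θ / 2) ^ 2 := by
    intro θ
    rw [key_identity θ]
    constructor
    · intro heq
      have hne : Complex.exp ((θ : ℂ) * Complex.I) ≠ 0 := Complex.exp_ne_zero _
      have h3 : ((a1 : ℂ) ^ 2) * Complex.exp ((θ : ℂ) * Complex.I) =
          ((4 * a2 * Real.cos (θ / 2) ^ 2 : ℝ) : ℂ) * Complex.exp ((θ : ℂ) * Complex.I) := by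
        rw [heq]; push_cast; ring
      have h2 := mul_right_cancel₀ hne h3
      exact_mod_cast h2
    · intro heq
      have : ((a1 : ℂ) ^ 2) = ((4 * a2 * Real.cos (θ / 2) ^ 2 : ℝ) : ℂ) := by
        exact_mod_cast congrArg (fun x : ℝ => (x : ℂ)) heq
      rw [this]; push_cast; ring
  refine ⟨2 * Real.arccos c, ⟨⟨?_, ?_⟩, ?_⟩, ?_⟩
  · have := Real.arccos_pos.mpr hc1
    linarith
  · have : Real.arccos c < Real.pi / 2 := Real.arccos_lt_pi_div_two.mpr hc0
    linarith
  · rw [hequiv]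
    have : Real.cos (2 * Real.arccos c / 2) = c := by
      rw [show 2 * Real.arccos c / 2 = Real.arccos c by ring,
          Real.cos_arccos (by linarith) (by linarith)]
    rw [this]
    field_simp at hcsq ⊢
    linarith [hcsq]
  · rintro θ ⟨⟨hθ0, hθπ⟩, heq⟩
    rw [hequiv] at heq
    have hcos_pos : 0 < Real.cos (θ / 2) := by
      apply Real.cos_pos_of_mem_Ioo
      constructor <;> [linarith [Real.pi_pos]; linarith]
    have hcossq : Real.cos (θ / 2) ^ 2 = c ^ 2 := by
      rw [hcsq]; field_simp; linarith
    have hcos : Real.cos (θ / 2) = c := by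
      nlinarith
    have : Real.arccos c = θ / 2 := by
      rw [← hcos, Real.arccos_cos (by linarith) (by linarith)]
    linarith
end
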